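/- arXiv:1604.06124 — 9 statements merged into one kernel-verified Lean document; each statement's English description precedes it below -/
import Mathlib

section
/- Let b, c : ℕ⁺ → ℂ be arbitrary arithmetic functions and let a be their Dirichlet convolution, a(n) = ∑_{de=n} b(d) c(e). Then for all positive integers n and r, a(nr) = ∑_{r₁ r₂ = r} ∑_{m₁ m₂ = n, gcd(m₂, r₁) = 1} b(m₁ r₁) c(m₂ r₂), where the outer sum is over ordered factorizations r = r₁ r₂ and the inner sum is over ordered factorizations n = m₁ m₂ with m₂ coprime to r₁. -/
/-! With `g = gcd(d, n)`, a factorization `d e = n r` comes from the tuple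
`m₁ = g`, `r₁ = d / g`, `m₂ = n / g`, `r₂ = e / m₂`: since `d / g` and `n / g` are coprime and
`(d / g) e = (n / g) r`, the quotient `n / g` divides `e` and `r₁ r₂ = r`. Conversely, if `m₂` is
coprime to `r₁` then `gcd(m₁ r₁, m₁ m₂) = m₁`, so `((r₁, r₂), (m₁, m₂)) ↦ (m₁ r₁, m₂ r₂)` is a
bijection matching the terms of the two sums. -/

open scoped BigOperators

namespace Nat

theorem div_gcd_mul_eq_div_gcd_mul {d e n r : ℕ} (h : d * e = n * r) :
    d / d.gcd n * e = n / d.gcd n * r := by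
  rw [Nat.div_mul_right_comm (gcd_dvd_left d n), h, Nat.div_mul_right_comm (gcd_dvd_right d n)]

theorem div_gcd_dvd_of_mul_eq {d e n r : ℕ} (hd : d ≠ 0) (h : d * e = n * r) :
    n / d.gcd n ∣ e :=
  (coprime_div_gcd_div_gcd (gcd_pos_of_pos_left n (pos_of_ne_zero hd))).symm.dvd_of_dvd_mul_left
    ⟨r, div_gcd_mul_eq_div_gcd_mul h⟩

theorem div_gcd_mul_div_div_gcd_of_mul_eq {d e n r : ℕ} (hd : d ≠ 0) (hn : n ≠ 0)
    (h : d * e = n * r) : d / d.gcd n * (e / (n / d.gcd n)) = r := by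
  have hng : n / d.gcd n ≠ 0 :=
    right_ne_zero_of_mul ((Nat.mul_div_cancel' (gcd_dvd_right d n)).symm ▸ hn)
  rw [← Nat.mul_div_assoc _ (div_gcd_dvd_of_mul_eq hd h), div_gcd_mul_eq_div_gcd_mul h,
    Nat.mul_div_cancel_left _ (pos_of_ne_zero hng)]

end Nat

open Nat

def coprimeFactorizationPairs (n r : ℕ) : Finset ((ℕ × ℕ) × (ℕ × ℕ)) :=
  (r.divisorsAntidiagonal ×ˢ n.divisorsAntidiagonal).filter fun x => x.2.2.Coprime x.1.1

theorem mem_coprimeFactorizationPairs {n r : ℕ} {x : (ℕ × ℕ) × (ℕ × ℕ)} :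
    x ∈ coprimeFactorizationPairs n r ↔
      x.1 ∈ r.divisorsAntidiagonal ∧ x.2 ∈ n.divisorsAntidiagonal.filter (·.2.Coprime x.1.1) := by
  simp only [coprimeFactorizationPairs, Finset.mem_filter, Finset.mem_product, and_assoc]

theorem mk_mem_coprimeFactorizationPairs {n r q₁ q₂ m₁ m₂ : ℕ} :
    ((q₁, q₂), (m₁, m₂)) ∈ coprimeFactorizationPairs n r ↔
      q₁ * q₂ = r ∧ m₁ * m₂ = n ∧ m₂.Coprime q₁ ∧ n ≠ 0 ∧ r ≠ 0 := by
  simp only [mem_coprimeFactorizationPairs, Finset.mem_filter, mem_divisorsAntidiagonal]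
  tauto

def mulPairs (x : (ℕ × ℕ) × (ℕ × ℕ)) : ℕ × ℕ :=
  (x.2.1 * x.1.1, x.2.2 * x.1.2)

def splitByGcd (n : ℕ) (p : ℕ × ℕ) : (ℕ × ℕ) × (ℕ × ℕ) :=
  ((p.1 / p.1.gcd n, p.2 / (n / p.1.gcd n)), (p.1.gcd n, n / p.1.gcd n))

variable {n r : ℕ}

theorem mulPairs_mem {x : (ℕ × ℕ) × (ℕ × ℕ)} (hx : x ∈ coprimeFactorizationPairs n r) :
    mulPairs x ∈ (n * r).divisorsAntidiagonal := by
  obtain ⟨⟨q₁, q₂⟩, m₁, m₂⟩ := x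
  obtain ⟨rfl, rfl, -, hn, hr⟩ := mk_mem_coprimeFactorizationPairs.mp hx
  exact mem_divisorsAntidiagonal.mpr ⟨by simp only [mulPairs]; ring, mul_ne_zero hn hr⟩

theorem splitByGcd_mem {p : ℕ × ℕ} (hp : p ∈ (n * r).divisorsAntidiagonal) :
    splitByGcd n p ∈ coprimeFactorizationPairs n r := by
  obtain ⟨hde, hnr⟩ := mem_divisorsAntidiagonal.mp hp
  have hd : p.1 ≠ 0 := left_ne_zero_of_mul (hde ▸ hnr)
  rw [splitByGcd, mk_mem_coprimeFactorizationPairs]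
  exact ⟨div_gcd_mul_div_div_gcd_of_mul_eq hd (left_ne_zero_of_mul hnr) hde,
    Nat.mul_div_cancel' (Nat.gcd_dvd_right p.1 n),
    (coprime_div_gcd_div_gcd (gcd_pos_of_pos_left n (pos_of_ne_zero hd))).symm,
    left_ne_zero_of_mul hnr, right_ne_zero_of_mul hnr⟩

theorem mulPairs_splitByGcd {p : ℕ × ℕ} (hp : p ∈ (n * r).divisorsAntidiagonal) :
    mulPairs (splitByGcd n p) = p := by
  obtain ⟨hde, hnr⟩ := mem_divisorsAntidiagonal.mp hp
  have hd : p.1 ≠ 0 := left_ne_zero_of_mul (hde ▸ hnr)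
  simp only [mulPairs, splitByGcd, Nat.mul_div_cancel' (Nat.gcd_dvd_left p.1 n),
    Nat.mul_div_cancel' (div_gcd_dvd_of_mul_eq hd hde)]

theorem splitByGcd_mulPairs {x : (ℕ × ℕ) × (ℕ × ℕ)} (hx : x ∈ coprimeFactorizationPairs n r) :
    splitByGcd n (mulPairs x) = x := by
  obtain ⟨⟨q₁, q₂⟩, m₁, m₂⟩ := x
  obtain ⟨rfl, rfl, hcop, hn, -⟩ := mk_mem_coprimeFactorizationPairs.mp hx
  have hm₁ : 0 < m₁ := pos_of_ne_zero (left_ne_zero_of_mul hn)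
  have hm₂ : 0 < m₂ := pos_of_ne_zero (right_ne_zero_of_mul hn)
  have hgcd : (m₁ * q₁).gcd (m₁ * m₂) = m₁ := by
    rw [Nat.gcd_mul_left, hcop.symm.gcd_eq_one, mul_one]
  simp only [mulPairs, splitByGcd, hgcd, Nat.mul_div_cancel_left _ hm₁,
    Nat.mul_div_cancel_left _ hm₂]

theorem dirichlet_convolution_shift_general (b c : ℕ → ℂ) (n r : ℕ) :
    (∑ p ∈ (n * r).divisorsAntidiagonal, b p.1 * c p.2)
      = ∑ q ∈ r.divisorsAntidiagonal,
          ∑ m ∈ n.divisorsAntidiagonal.filter (fun m => Nat.Coprime m.2 q.1),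
            b (m.1 * q.1) * c (m.2 * q.2) := by
  rw [← Finset.sum_finset_product' _ _ _ fun _ => mem_coprimeFactorizationPairs]
  exact (Finset.sum_nbij' mulPairs (splitByGcd n) (fun _ => mulPairs_mem) (fun _ => splitByGcd_mem)
    (fun _ => splitByGcd_mulPairs) (fun _ => mulPairs_splitByGcd) fun _ _ => rfl).symm

theorem dirichlet_convolution_shift (b c : ℕ → ℂ) (n r : ℕ) (hn : 0 < n) (hr : 0 < r) :
    (∑ p ∈ (n * r).divisorsAntidiagonal, b p.1 * c p.2)
      = ∑ q ∈ r.divisorsAntidiagonal,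
          ∑ m ∈ n.divisorsAntidiagonal.filter (fun m => Nat.Coprime m.2 q.1),
            b (m.1 * q.1) * c (m.2 * q.2) :=
  dirichlet_convolution_shift_general b c n r
end

section
/- Let α, γ be complex numbers, r a positive integer, and w a complex number with Re(w+α) > 1 and Re(w+γ) > 1. Then ∑_{m=1}^∞ I_{α,γ}(mr) m^{-w} converges absolutely and equals ζ(w+α) · r^{-α} · Φ(γ-α, r) / (Φ(w+γ, r) · ζ(w+γ)). -/
open scoped BigOperators

/-- `Ifun α γ n = ∑_{de = n} μ(e) d^{-α} e^{-γ}`. -/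
noncomputable def Ifun (α γ : ℂ) (n : ℕ) : ℂ :=
  ∑ p ∈ n.divisorsAntidiagonal,
    (ArithmeticFunction.moebius p.2 : ℂ) * (p.1 : ℂ) ^ (-α) * (p.2 : ℂ) ^ (-γ)

/-- `Phi x q = ∏_{p ∣ q} (1 - p^{-x})`, the product over primes dividing `q`. -/
noncomputable def Phi (x : ℂ) (q : ℕ) : ℂ :=
  ∏ p ∈ q.primeFactors, (1 - (p : ℂ) ^ (-x))

/-!
Put `s = w + α` and `t = w + γ`. Since `(m + 1)^{-w} = r^w (de)^{-w}` when `de = (m + 1) r`, the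
series is `r^w` times the absolutely convergent double series of `μ(e) d^{-s} e^{-t}` over the
pairs with `r ∣ de`. For fixed `e` that condition reads `r / gcd(r, e) ∣ d`, so summing over
`d = k · r / gcd(r, e)` gives `ζ(s) r^{-s} ∑_e μ(e) e^{-t} gcd(r, e)^s`. The last series is
multiplicative, with Euler factors `1 - p^{-t} gcd(r, p)^s`; these agree with the factors
`1 - p^{-t}` of `1 / ζ(t)` except at the primes `p ∣ r`, where they are `1 - p^{s-t}`.
-/

open ArithmeticFunction Complex
open scoped ArithmeticFunction.Moebius

theorem hasSum_sum_divisorsAntidiagonal_succ_mul {α : Type*} [AddCommMonoid α]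
    [TopologicalSpace α] [ContinuousAdd α] [RegularSpace α] {r : ℕ} (hr : r ≠ 0)
    {f : ℕ × ℕ → α} {a : α} (hf : HasSum f a)
    (hsupp : Function.support f ⊆ {p | p.1 * p.2 ≠ 0 ∧ r ∣ p.1 * p.2}) :
    HasSum (fun m : ℕ => ∑ p ∈ ((m + 1) * r).divisorsAntidiagonal, f p) a := by
  let j : (Σ m : ℕ, ((m + 1) * r).divisorsAntidiagonal) → ℕ × ℕ := fun x => x.2
  have hj : Function.Injective j := by
    rintro ⟨m, p, hp⟩ ⟨m', p', hp'⟩ (rfl : p = p')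
    obtain rfl : m = m' := by
      have h := (Nat.mem_divisorsAntidiagonal.1 hp).1.symm.trans
        (Nat.mem_divisorsAntidiagonal.1 hp').1
      simpa using Nat.eq_of_mul_eq_mul_right (Nat.pos_of_ne_zero hr) h
    rfl
  have hrange : ∀ p ∉ Set.range j, f p = 0 := by
    intro p hp
    by_contra hfp
    obtain ⟨hne, k, hk⟩ := hsupp hfp
    obtain ⟨m, rfl⟩ : ∃ m, k = m + 1 :=
      Nat.exists_eq_succ_of_ne_zero (by rintro rfl; simp_all)
    exact hp ⟨⟨m, p, by simp [Nat.mem_divisorsAntidiagonal, hk, mul_comm, hr]⟩, rfl⟩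
  refine ((hj.hasSum_iff hrange).2 hf).sigma fun m => ?_
  rw [← Finset.sum_coe_sort]
  exact hasSum_fintype _

lemma hasProd_primes_ite_dvd {r : ℕ} (hr : r ≠ 0) (g : ℕ → ℂ) :
    HasProd (fun p : Nat.Primes => if (p : ℕ) ∣ r then g p else 1)
      (∏ p ∈ r.primeFactors, g p) := by
  have h : HasProd (fun n : ℕ => if n ∈ r.primeFactors then g n else 1)
      (∏ p ∈ r.primeFactors, g p) := by
    convert hasProd_prod_of_ne_finset_one (L := .unconditional _) (s := r.primeFactors)
      (f := fun n : ℕ => if n ∈ r.primeFactors then g n else 1) fun n hn => if_neg hn using 1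
    exact Finset.prod_congr rfl fun p hp => (if_pos hp).symm
  refine ((Nat.Primes.coe_nat_injective.hasProd_iff fun n hn =>
    if_neg fun hnr => hn ⟨⟨n, Nat.prime_of_mem_primeFactors hnr⟩, rfl⟩).2 h).congr_fun
    fun p => ?_
  simp [p.prop, hr]

lemma norm_moebius_le_one (n : ℕ) : ‖(μ n : ℂ)‖ ≤ 1 := by
  simpa [← Int.cast_abs] using (Int.cast_le (R := ℝ)).2 abs_moebius_le_one

lemma hasSum_natCast_cpow_neg {s : ℂ} (hs : 1 < s.re) :
    HasSum (fun n : ℕ => (n : ℂ) ^ (-s)) (riemannZeta s) := by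
  rw [← tsum_riemannZetaSummand hs]
  exact (summable_riemannZetaSummand hs).of_norm.hasSum

theorem Nat.dvd_mul_iff_div_gcd_dvd {r d e : ℕ} (hr : r ≠ 0) :
    r ∣ d * e ↔ r / r.gcd e ∣ d := by
  rw [Nat.div_dvd_iff_dvd_mul (Nat.gcd_dvd_left r e)
    (Nat.gcd_pos_of_pos_left e (Nat.pos_of_ne_zero hr)), mul_comm (r.gcd e)]
  exact dvd_mul_gcd_iff_dvd_mul.symm

noncomputable def moebiusGcdTerm (r : ℕ) (s t : ℂ) (e : ℕ) : ℂ :=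
  μ e * (e : ℂ) ^ (-t) * (r.gcd e : ℂ) ^ s

section moebiusGcdTerm

variable {r : ℕ} {s t : ℂ}

lemma moebiusGcdTerm_mul {m n : ℕ} (h : m.Coprime n) :
    moebiusGcdTerm r s t (m * n) = moebiusGcdTerm r s t m * moebiusGcdTerm r s t n := by
  simp only [moebiusGcdTerm, isMultiplicative_moebius.map_mul_of_coprime h, h.gcd_mul r,
    Nat.cast_mul, natCast_mul_natCast_cpow, Int.cast_mul]
  ring

lemma moebiusGcdTerm_prime_pow_eq_zero {p : ℕ} (hp : p.Prime) {k : ℕ} (hk : 1 < k) :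
    moebiusGcdTerm r s t (p ^ k) = 0 := by
  simp [moebiusGcdTerm, moebius_apply_prime_pow hp (by omega : k ≠ 0), show k ≠ 1 by omega]

lemma tsum_moebiusGcdTerm_prime_pow {p : ℕ} (hp : p.Prime) :
    ∑' k, moebiusGcdTerm r s t (p ^ k) = 1 - (p : ℂ) ^ (-t) * (r.gcd p : ℂ) ^ s := by
  rw [tsum_eq_sum (s := Finset.range 2) fun k hk =>
    moebiusGcdTerm_prime_pow_eq_zero hp (by simpa using hk)]
  simp [Finset.sum_range_succ, moebiusGcdTerm, moebius_apply_prime hp, sub_eq_add_neg]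

lemma norm_moebiusGcdTerm_le (hr : r ≠ 0) (hs : 0 ≤ s.re) (e : ℕ) :
    ‖moebiusGcdTerm r s t e‖ ≤ (r : ℝ) ^ s.re * ‖(e : ℂ) ^ (-t)‖ := by
  have hgcd : ‖(r.gcd e : ℂ) ^ s‖ ≤ (r : ℝ) ^ s.re := by
    rw [norm_natCast_cpow_of_pos (Nat.gcd_pos_of_pos_left e (Nat.pos_of_ne_zero hr))]
    gcongr
    exact Nat.gcd_le_left e (Nat.pos_of_ne_zero hr)
  calc ‖moebiusGcdTerm r s t e‖
        = ‖(μ e : ℂ)‖ * ‖(e : ℂ) ^ (-t)‖ * ‖(r.gcd e : ℂ) ^ s‖ := by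
        simp only [moebiusGcdTerm, norm_mul]
    _ ≤ 1 * ‖(e : ℂ) ^ (-t)‖ * (r : ℝ) ^ s.re := by gcongr; exact norm_moebius_le_one e
    _ = (r : ℝ) ^ s.re * ‖(e : ℂ) ^ (-t)‖ := by ring

lemma summable_norm_moebiusGcdTerm (hr : r ≠ 0) (hs : 0 ≤ s.re) (ht : 1 < t.re) :
    Summable fun e => ‖moebiusGcdTerm r s t e‖ :=
  ((summable_riemannZetaSummand ht).mul_left _).of_nonneg_of_le (fun _ => norm_nonneg _)
    (norm_moebiusGcdTerm_le hr hs)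

lemma hasProd_moebiusGcdTerm (hr : r ≠ 0) (hs : 0 ≤ s.re) (ht : 1 < t.re) :
    HasProd (fun p : Nat.Primes => 1 - (p : ℂ) ^ (-t) * (r.gcd p : ℂ) ^ s)
      (∑' e, moebiusGcdTerm r s t e) := by
  have hzero : moebiusGcdTerm r s t 0 = 0 := by simp [moebiusGcdTerm]
  convert EulerProduct.eulerProduct_hasProd (by simp [moebiusGcdTerm]) moebiusGcdTerm_mul
    (summable_norm_moebiusGcdTerm hr hs ht) hzero using 2 with p
  exact (tsum_moebiusGcdTerm_prime_pow p.prop).symm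

lemma eulerFactor_mul_inv_eq_ite {p : ℕ} (hp : p.Prime) (ht : 1 < t.re) :
    (1 - (p : ℂ) ^ (-t) * (r.gcd p : ℂ) ^ s) * (1 - (p : ℂ) ^ (-t))⁻¹ =
      if p ∣ r then (1 - (p : ℂ) ^ (-(t - s))) / (1 - (p : ℂ) ^ (-t)) else 1 := by
  split_ifs with hpr
  · rw [Nat.gcd_eq_right hpr, ← cpow_add _ _ (Nat.cast_ne_zero.2 hp.ne_zero), div_eq_mul_inv]
    ring_nf
  · rw [(Nat.coprime_comm.1 ((hp.coprime_iff_not_dvd).2 hpr)).gcd_eq_one, Nat.cast_one,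
      one_cpow, mul_one, mul_inv_cancel₀ (one_sub_prime_cpow_ne_zero hp ht)]

theorem tsum_moebiusGcdTerm (hr : r ≠ 0) (hs : 0 ≤ s.re) (ht : 1 < t.re) :
    ∑' e, moebiusGcdTerm r s t e = Phi (t - s) r / (Phi t r * riemannZeta t) := by
  have h := ((hasProd_moebiusGcdTerm hr hs ht).mul (riemannZeta_eulerProduct_hasProd ht)).congr_fun
    fun p => (eulerFactor_mul_inv_eq_ite p.prop ht).symm
  have hval := h.unique (hasProd_primes_ite_dvd hr
    fun p => (1 - (p : ℂ) ^ (-(t - s))) / (1 - (p : ℂ) ^ (-t)))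
  rw [Finset.prod_div_distrib] at hval
  rw [← div_div, Phi, Phi, ← hval,
    mul_div_cancel_right₀ _ (riemannZeta_ne_zero_of_one_lt_re ht)]

end moebiusGcdTerm

noncomputable def restrictedTerm (r : ℕ) (s t : ℂ) (p : ℕ × ℕ) : ℂ :=
  if r ∣ p.1 * p.2 then μ p.2 * (p.1 : ℂ) ^ (-s) * (p.2 : ℂ) ^ (-t) else 0

section restrictedTerm

variable {r : ℕ} {s t : ℂ}

lemma norm_restrictedTerm_le (p : ℕ × ℕ) :
    ‖restrictedTerm r s t p‖ ≤ ‖(p.1 : ℂ) ^ (-s)‖ * ‖(p.2 : ℂ) ^ (-t)‖ := by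
  unfold restrictedTerm
  split_ifs
  · rw [norm_mul, norm_mul, mul_assoc]
    exact mul_le_of_le_one_left (by positivity) (norm_moebius_le_one _)
  · simp only [norm_zero]
    positivity

lemma summable_norm_restrictedTerm (hs : 1 < s.re) (ht : 1 < t.re) :
    Summable fun p => ‖restrictedTerm r s t p‖ :=
  ((summable_riemannZetaSummand hs).mul_of_nonneg (summable_riemannZetaSummand ht)
    (fun _ => norm_nonneg _) fun _ => norm_nonneg _).of_nonneg_of_le (fun _ => norm_nonneg _)
    norm_restrictedTerm_le

lemma support_restrictedTerm_subset (hs : s ≠ 0) (ht : t ≠ 0) :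
    Function.support (restrictedTerm r s t) ⊆ {p | p.1 * p.2 ≠ 0 ∧ r ∣ p.1 * p.2} := by
  rintro ⟨d, e⟩ hp
  rw [Function.mem_support, restrictedTerm] at hp
  split_ifs at hp with hdvd
  · refine ⟨mul_ne_zero ?_ ?_, hdvd⟩ <;> rintro rfl <;> simp_all
  · exact (hp rfl).elim

lemma restrictedTerm_mul_div_gcd (hr : r ≠ 0) (e k : ℕ) :
    restrictedTerm r s t (k * (r / r.gcd e), e) =
      (r : ℂ) ^ (-s) * moebiusGcdTerm r s t e * (k : ℂ) ^ (-s) := by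
  have hgcd : (r.gcd e : ℂ) ≠ 0 := by simp [Nat.gcd_eq_zero_iff, hr]
  have hr' : (r / r.gcd e : ℕ) * r.gcd e = r := Nat.div_mul_cancel (Nat.gcd_dvd_left r e)
  have hsplit : ((r / r.gcd e : ℕ) : ℂ) ^ (-s) = (r : ℂ) ^ (-s) * (r.gcd e : ℂ) ^ s := by
    calc _ = ((r / r.gcd e : ℕ) : ℂ) ^ (-s) * (r.gcd e : ℂ) ^ (-s) * (r.gcd e : ℂ) ^ s := by
          rw [mul_assoc, ← cpow_add _ _ hgcd, neg_add_cancel, cpow_zero, mul_one]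
      _ = _ := by rw [← natCast_mul_natCast_cpow, ← Nat.cast_mul, hr']
  rw [restrictedTerm, if_pos ((Nat.dvd_mul_iff_div_gcd_dvd hr).2 (dvd_mul_left _ _)),
    Nat.cast_mul, natCast_mul_natCast_cpow, hsplit, moebiusGcdTerm]
  ring

theorem hasSum_restrictedTerm (hr : r ≠ 0) (hs : 1 < s.re) (ht : 1 < t.re) :
    HasSum (restrictedTerm r s t)
      (riemannZeta s * (r : ℂ) ^ (-s) * ∑' e, moebiusGcdTerm r s t e) := by
  let j : ℕ × ℕ → ℕ × ℕ := fun q => (q.2 * (r / r.gcd q.1), q.1)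
  have hj : Function.Injective j := by
    rintro ⟨e, k⟩ ⟨e', k'⟩ h
    simp only [j, Prod.mk.injEq] at h
    obtain ⟨h, rfl⟩ := h
    have hpos : 0 < r / r.gcd e := Nat.div_pos (Nat.gcd_le_left e (Nat.pos_of_ne_zero hr))
      (Nat.gcd_pos_of_pos_left e (Nat.pos_of_ne_zero hr))
    rw [Nat.eq_of_mul_eq_mul_right hpos h]
  have hrange : ∀ p ∉ Set.range j, restrictedTerm r s t p = 0 := by
    rintro ⟨d, e⟩ hp
    refine if_neg fun hdvd => hp ⟨(e, d / (r / r.gcd e)), ?_⟩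
    simp [j, Nat.div_mul_cancel ((Nat.dvd_mul_iff_div_gcd_dvd hr).1 hdvd)]
  have hsum := (summable_norm_restrictedTerm (r := r) hs ht).of_norm
  have h := ((hj.hasSum_iff hrange).2 hsum.hasSum).prod_fiberwise fun e => by
    simpa [j, restrictedTerm_mul_div_gcd hr] using
      (hasSum_natCast_cpow_neg hs).mul_left ((r : ℂ) ^ (-s) * moebiusGcdTerm r s t e)
  have hval : riemannZeta s * (r : ℂ) ^ (-s) * ∑' e, moebiusGcdTerm r s t e =
      ∑' p, restrictedTerm r s t p := by
    rw [← h.tsum_eq, tsum_mul_right, tsum_mul_left]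
    ring
  exact hval ▸ hsum.hasSum

end restrictedTerm

lemma Ifun_succ_mul_mul_cpow (α γ w : ℂ) {r : ℕ} (hr : r ≠ 0) (m : ℕ) :
    Ifun α γ ((m + 1) * r) * ((m + 1 : ℕ) : ℂ) ^ (-w) =
      (r : ℂ) ^ w *
        ∑ p ∈ ((m + 1) * r).divisorsAntidiagonal, restrictedTerm r (w + α) (w + γ) p := by
  have hscale :
      ((m + 1 : ℕ) : ℂ) ^ (-w) = (r : ℂ) ^ w * (((m + 1) * r : ℕ) : ℂ) ^ (-w) := by
    rw [Nat.cast_mul, natCast_mul_natCast_cpow, mul_left_comm,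
      ← cpow_add _ _ (Nat.cast_ne_zero.2 hr), add_neg_cancel, cpow_zero, mul_one]
  have hsplit {n : ℕ} (hn : n ≠ 0) (z : ℂ) :
      (n : ℂ) ^ (-(w + z)) = (n : ℂ) ^ (-w) * (n : ℂ) ^ (-z) := by
    rw [neg_add, cpow_add _ _ (Nat.cast_ne_zero.2 hn)]
  rw [hscale, Ifun, Finset.sum_mul, Finset.mul_sum]
  refine Finset.sum_congr rfl fun p hp => ?_
  obtain ⟨hde, -⟩ := Nat.mem_divisorsAntidiagonal.1 hp
  obtain ⟨hd, he⟩ := Nat.ne_zero_of_mem_divisorsAntidiagonal hp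
  rw [restrictedTerm, if_pos (hde ▸ dvd_mul_left r (m + 1)), ← hde, Nat.cast_mul,
    natCast_mul_natCast_cpow, hsplit hd, hsplit he]
  ring

theorem Ifun_shifted_dirichlet_series (α γ w : ℂ) (r : ℕ) (hr : 0 < r)
    (hα : 1 < (w + α).re) (hγ : 1 < (w + γ).re) :
    (Summable fun m : ℕ => ‖Ifun α γ ((m + 1) * r) * ((m + 1 : ℕ) : ℂ) ^ (-w)‖) ∧
    ∑' m : ℕ, Ifun α γ ((m + 1) * r) * ((m + 1 : ℕ) : ℂ) ^ (-w)
      = riemannZeta (w + α) * (r : ℂ) ^ (-α) * Phi (γ - α) r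
          / (Phi (w + γ) r * riemannZeta (w + γ)) := by
  have hsupp := support_restrictedTerm_subset (r := r) (ne_zero_of_one_lt_re hα)
    (ne_zero_of_one_lt_re hγ)
  have hsum := hasSum_sum_divisorsAntidiagonal_succ_mul hr.ne'
    (hasSum_restrictedTerm hr.ne' hα hγ) hsupp
  have hsum_norm := hasSum_sum_divisorsAntidiagonal_succ_mul hr.ne'
    (summable_norm_restrictedTerm (r := r) hα hγ).hasSum
    fun p hp => hsupp (norm_ne_zero_iff.1 hp)
  simp only [Ifun_succ_mul_mul_cpow α γ w hr.ne']
  refine ⟨(hsum_norm.summable.mul_left ‖(r : ℂ) ^ w‖).of_nonneg_of_le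
    (fun _ => norm_nonneg _) fun m => ?_, ?_⟩
  · rw [norm_mul]
    gcongr
    exact norm_sum_le _ _
  · have hpow : (r : ℂ) ^ w * (r : ℂ) ^ (-(w + α)) = (r : ℂ) ^ (-α) := by
      rw [← cpow_add _ _ (Nat.cast_ne_zero.2 hr.ne'), neg_add, add_neg_cancel_left]
    rw [tsum_mul_left, hsum.tsum_eq, tsum_moebiusGcdTerm hr.ne' (by linarith) hγ,
      show w + γ - (w + α) = γ - α by ring, ← hpow]
    ring
end

section
/- Let α, γ be complex numbers with Re(α-γ) < 1 and let p be a prime. Then F_{α,γ}(p) = -p^{α-γ} / (1 - p^{-1+α-γ}). -/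
open scoped BigOperators

/-- `Ffun α γ q = q^α ∑_{d∣q} (μ(d) d^{1-α}/φ(d)) ∑_{e∣d} μ(e) e^{α-1}
(qe/d)^{-α} Φ(γ-α, qe/d)/Φ(1+γ-α, qe/d)`.  Since `d ∣ q` and `e ∣ d`, the
quantity `qe/d` is the natural number `(q/d)*e`. -/
noncomputable def Ffun (α γ : ℂ) (q : ℕ) : ℂ :=
  (q : ℂ) ^ α *
    ∑ d ∈ q.divisors,
      (ArithmeticFunction.moebius d : ℂ) * (d : ℂ) ^ (1 - α) / (Nat.totient d : ℂ) *
        ∑ e ∈ d.divisors,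
          (ArithmeticFunction.moebius e : ℂ) * (e : ℂ) ^ (α - 1) *
            ((q / d * e : ℕ) : ℂ) ^ (-α) *
            Phi (γ - α) (q / d * e) / Phi (1 + γ - α) (q / d * e)

/-! For `q = p` only `d ∈ {1, p}` and `e ∈ {1, d}` occur, and the powers of `p` cancel against
the prefactor `p ^ α`, leaving `F = p / (p - 1) * (r - 1)` with
`r = Φ(γ - α, p) / Φ(1 + γ - α, p) = (1 - x) / (1 - x / p)`, `x = p ^ (α - γ)`.
Then `r - 1 = -x (1 - 1 / p) / (1 - x / p)`, and `Re (α - γ) < 1` gives `|x / p| < 1`, so the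
denominator does not vanish. -/

lemma Phi_one (x : ℂ) : Phi x 1 = 1 := by
  simp [Phi]

lemma Phi_prime {p : ℕ} (hp : p.Prime) (x : ℂ) : Phi x p = 1 - (p : ℂ) ^ (-x) := by
  simp [Phi, hp.primeFactors]

lemma natCast_cpow_ne_one {n : ℕ} (hn : 1 < n) {s : ℂ} (hs : s.re < 0) : (n : ℂ) ^ s ≠ 1 := by
  intro h
  have hnorm := Complex.norm_natCast_cpow_of_pos (by omega : 0 < n) s
  rw [h, norm_one] at hnorm
  exact (Real.rpow_lt_one_of_one_lt_of_neg (by exact_mod_cast hn) hs).ne' hnorm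

lemma Ffun_prime_eq {p : ℕ} (hp : p.Prime) (α γ : ℂ) :
    Ffun α γ p = p / (p - 1) * (Phi (γ - α) p / Phi (1 + γ - α) p - 1) := by
  have hp0 : (p : ℂ) ≠ 0 := by exact_mod_cast hp.ne_zero
  have hp1 : (p : ℂ) - 1 ≠ 0 := sub_ne_zero.mpr (by exact_mod_cast hp.ne_one)
  have htot : (p.totient : ℂ) = p - 1 := by
    rw [Nat.totient_prime hp, Nat.cast_sub hp.one_le, Nat.cast_one]
  have hα : (p : ℂ) ^ α ≠ 0 := by simp [Complex.cpow_eq_zero_iff, hp0]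
  rw [Ffun, hp.divisors, Finset.sum_pair hp.one_lt.ne, hp.divisors, Finset.sum_pair hp.one_lt.ne]
  simp only [Nat.divisors_one, Finset.sum_singleton, Nat.div_one, Nat.div_self hp.pos,
    one_mul, mul_one, Nat.cast_one, ArithmeticFunction.moebius_apply_one,
    ArithmeticFunction.moebius_apply_prime hp, Nat.totient_one, Complex.one_cpow, Int.cast_one,
    Int.cast_neg, Phi_one, htot]
  rw [Complex.cpow_neg, Complex.cpow_sub _ _ hp0, Complex.cpow_sub _ _ hp0, Complex.cpow_one]
  generalize Phi (γ - α) p = a, Phi (1 + γ - α) p = b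
  field_simp
  ring

theorem Ffun_prime (α γ : ℂ) (h : (α - γ).re < 1) (p : ℕ) (hp : p.Prime) :
    Ffun α γ p = -(p : ℂ) ^ (α - γ) / (1 - (p : ℂ) ^ (-1 + α - γ)) := by
  have hp1 : (p : ℂ) - 1 ≠ 0 := sub_ne_zero.mpr (by exact_mod_cast hp.ne_one)
  have hden : 1 - (p : ℂ) ^ (-1 + α - γ) ≠ 0 :=
    sub_ne_zero.mpr (natCast_cpow_ne_one hp.one_lt (by
      simp only [Complex.sub_re, Complex.add_re, Complex.neg_re, Complex.one_re] at h ⊢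
      linarith)).symm
  have hshift : (p : ℂ) ^ (α - γ) = p * (p : ℂ) ^ (-1 + α - γ) := by
    rw [show α - γ = 1 + (-1 + α - γ) by ring, Complex.cpow_add _ _ (by exact_mod_cast hp.ne_zero),
      Complex.cpow_one]
  rw [Ffun_prime_eq hp, Phi_prime hp, Phi_prime hp, neg_sub,
    show -(1 + γ - α) = -1 + α - γ by ring, hshift]
  field_simp
  ring
end

section
/- Let α, γ be complex numbers with Re(α-γ) < 1, let p be a prime, and let j ≥ 2 be an integer. Then F_{α,γ}(p^j) = 0. -/
open scoped BigOperators

/-!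
Only `d = 1` and `d = p` survive the Möbius factor. Since `j ≥ 2`, every `q e / d` that occurs is a
positive power of `p`, so `Φ(x, q e / d) = 1 - p^{-x}` and the `Φ`-quotient is a common factor.
What remains is `p^{-jα} - p^{1-α}/(p-1) · (p^{-(j-1)α} - p^{α-1} p^{-jα}) = 0`.
-/

open ArithmeticFunction
open scoped ArithmeticFunction.Moebius

theorem Phi_pow (x : ℂ) (n : ℕ) {k : ℕ} (hk : k ≠ 0) : Phi x (n ^ k) = Phi x n := by
  rw [Phi, Phi, Nat.primeFactors_pow n hk]

theorem Complex.natCast_pow_cpow (n k : ℕ) (z : ℂ) : ((n : ℂ) ^ k) ^ z = ((n : ℂ) ^ z) ^ k := by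
  rw [← Complex.natCast_cpow_natCast_mul, Complex.cpow_nat_mul]

theorem sum_divisors_prime_pow_moebius_mul {R : Type*} [Ring R] {p k : ℕ} (hp : p.Prime)
    (hk : k ≠ 0) (f : ℕ → R) :
    ∑ d ∈ (p ^ k).divisors, (μ d : R) * f d = f 1 - f p := by
  rw [Nat.sum_divisors_prime_pow hp, ← Finset.sum_subset (s₁ := {0, 1}) ?_ ?_,
    Finset.sum_pair zero_ne_one]
  · simp [moebius_apply_prime hp, sub_eq_add_neg]
  · intro i
    simp only [Finset.mem_insert, Finset.mem_singleton, Finset.mem_range]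
    omega
  · intro i _ hi
    simp only [Finset.mem_insert, Finset.mem_singleton, not_or] at hi
    simp [moebius_apply_prime_pow hp hi.1, hi.2]

theorem sum_divisors_prime_moebius_mul {R : Type*} [Ring R] {p : ℕ} (hp : p.Prime) (f : ℕ → R) :
    ∑ d ∈ p.divisors, (μ d : R) * f d = f 1 - f p := by
  simpa using sum_divisors_prime_pow_moebius_mul hp one_ne_zero f

theorem Ffun_prime_power_eq_zero_general (α γ : ℂ) (p : ℕ) (hp : p.Prime)
    (j : ℕ) (hj : 2 ≤ j) :
    Ffun α γ (p ^ j) = 0 := by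
  obtain ⟨k, rfl⟩ := Nat.exists_eq_add_of_le' hj
  have hquot : p ^ (k + 2) / p = p ^ (k + 1) := by
    rw [pow_succ, Nat.mul_div_cancel _ hp.pos]
  simp only [Ffun, mul_div_assoc, mul_assoc]
  rw [sum_divisors_prime_pow_moebius_mul hp (by omega),
    sum_divisors_prime_moebius_mul hp]
  simp only [Nat.divisors_one, Finset.sum_singleton, Nat.div_one, mul_one, hquot, ← pow_succ]
  have hp0 : (p : ℂ) ≠ 0 := Nat.cast_ne_zero.mpr hp.ne_zero
  have hp1 : (p : ℂ) - 1 ≠ 0 := sub_ne_zero.mpr (Nat.cast_ne_one.mpr hp.ne_one)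
  have hv : (p : ℂ) ^ α ≠ 0 := Complex.cpow_ne_zero_iff.mpr (Or.inl hp0)
  simp only [Nat.cast_one, Complex.one_cpow, Nat.totient_one, moebius_apply_one, Int.cast_one,
    Nat.cast_pow, Complex.natCast_pow_cpow, Phi_pow _ p (Nat.succ_ne_zero _), Nat.totient_prime hp,
    Nat.cast_sub hp.one_le, Complex.cpow_neg, Complex.cpow_sub _ _ hp0, Complex.cpow_one]
  generalize Phi (γ - α) p / Phi (1 + γ - α) p = w
  field_simp
  ring

theorem Ffun_prime_power_eq_zero (α γ : ℂ) (h : (α - γ).re < 1) (p : ℕ) (hp : p.Prime)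
    (j : ℕ) (hj : 2 ≤ j) :
    Ffun α γ (p ^ j) = 0 :=
  Ffun_prime_power_eq_zero_general α γ p hp j hj
end

section
/- Let α, γ be complex numbers with Re(α-γ) < 1. Then F_{α,γ} is multiplicative: F_{α,γ}(1) = 1 and for all coprime positive integers q₁, q₂ one has F_{α,γ}(q₁ q₂) = F_{α,γ}(q₁) F_{α,γ}(q₂). -/
open scoped BigOperators

/-!
Every ingredient of `Ffun` — `μ`, `φ`, `n ↦ n^s`, `Φ(x, ·)` — is multiplicative, and for
`q = q₁ q₂` with `q₁, q₂` coprime the divisors `d ∣ q`, `e ∣ d` factor uniquely as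
`d = d₁ d₂`, `e = e₁ e₂` with `eᵢ ∣ dᵢ ∣ qᵢ`; then `qe/d = (q₁e₁/d₁)(q₂e₂/d₂)` with coprime
factors, so the double divisor sum factors term by term.
-/

open ArithmeticFunction
open scoped ArithmeticFunction.Moebius

theorem Nat.Coprime.sum_divisors_mul_eq_mul_sum {R : Type*} [CommSemiring R] {m n : ℕ}
    (hmn : m.Coprime n) {f g h : ℕ → R}
    (hf : ∀ a ∈ m.divisors, ∀ b ∈ n.divisors, f (a * b) = g a * h b) :
    ∑ d ∈ (m * n).divisors, f d = (∑ a ∈ m.divisors, g a) * ∑ b ∈ n.divisors, h b := by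
  rw [Nat.divisors_mul, Finset.mul_def, Finset.sum_image hmn.mul_injOn_divisors,
    Finset.sum_product, Finset.sum_mul_sum]
  exact Finset.sum_congr rfl fun a ha => Finset.sum_congr rfl fun b hb => hf a ha b hb

theorem Nat.div_mul_dvd_of_dvd {q d e : ℕ} (hdq : d ∣ q) (hed : e ∣ d) : q / d * e ∣ q := by
  conv_rhs => rw [← Nat.div_mul_cancel hdq]
  exact Nat.mul_dvd_mul_left _ hed

theorem Phi_mul {m n : ℕ} (h : m.Coprime n) (x : ℂ) : Phi x (m * n) = Phi x m * Phi x n := by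
  rw [Phi, h.primeFactors_mul, Finset.prod_union h.disjoint_primeFactors, Phi, Phi]

theorem natCast_mul_cpow (m n : ℕ) (s : ℂ) :
    ((m * n : ℕ) : ℂ) ^ s = (m : ℂ) ^ s * (n : ℂ) ^ s := by
  rw [Nat.cast_mul, Complex.natCast_mul_natCast_cpow]

theorem moebius_mul_cast {m n : ℕ} (h : m.Coprime n) :
    (μ (m * n) : ℂ) = μ m * μ n := by
  rw [isMultiplicative_moebius.map_mul_of_coprime h, Int.cast_mul]

namespace Ffun

noncomputable def innerTerm (α γ : ℂ) (q d e : ℕ) : ℂ :=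
  (μ e : ℂ) * (e : ℂ) ^ (α - 1) * ((q / d * e : ℕ) : ℂ) ^ (-α) *
    Phi (γ - α) (q / d * e) / Phi (1 + γ - α) (q / d * e)

noncomputable def outerTerm (α γ : ℂ) (q d : ℕ) : ℂ :=
  (μ d : ℂ) * (d : ℂ) ^ (1 - α) / (d.totient : ℂ) * ∑ e ∈ d.divisors, innerTerm α γ q d e

theorem eq_cpow_mul_sum_outerTerm (α γ : ℂ) (q : ℕ) :
    Ffun α γ q = (q : ℂ) ^ α * ∑ d ∈ q.divisors, outerTerm α γ q d :=
  rfl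

variable {α γ : ℂ} {q₁ q₂ d₁ d₂ : ℕ}

theorem innerTerm_mul (hq : q₁.Coprime q₂) (hd₁ : d₁ ∣ q₁) (hd₂ : d₂ ∣ q₂) {e₁ e₂ : ℕ}
    (he₁ : e₁ ∣ d₁) (he₂ : e₂ ∣ d₂) :
    innerTerm α γ (q₁ * q₂) (d₁ * d₂) (e₁ * e₂) =
      innerTerm α γ q₁ d₁ e₁ * innerTerm α γ q₂ d₂ e₂ := by
  have he : e₁.Coprime e₂ :=
    (hq.coprime_dvd_left (he₁.trans hd₁)).coprime_dvd_right (he₂.trans hd₂)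
  have hk : (q₁ / d₁ * e₁).Coprime (q₂ / d₂ * e₂) :=
    (hq.coprime_dvd_left (Nat.div_mul_dvd_of_dvd hd₁ he₁)).coprime_dvd_right
      (Nat.div_mul_dvd_of_dvd hd₂ he₂)
  have hqde : q₁ * q₂ / (d₁ * d₂) * (e₁ * e₂) = q₁ / d₁ * e₁ * (q₂ / d₂ * e₂) := by
    rw [Nat.mul_div_mul_comm hd₁ hd₂, mul_mul_mul_comm]
  simp only [innerTerm]
  rw [hqde, Phi_mul hk, Phi_mul hk, natCast_mul_cpow, natCast_mul_cpow, moebius_mul_cast he]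
  ring

theorem outerTerm_mul (hq : q₁.Coprime q₂) (hd₁ : d₁ ∣ q₁) (hd₂ : d₂ ∣ q₂) :
    outerTerm α γ (q₁ * q₂) (d₁ * d₂) = outerTerm α γ q₁ d₁ * outerTerm α γ q₂ d₂ := by
  have hd : d₁.Coprime d₂ := (hq.coprime_dvd_left hd₁).coprime_dvd_right hd₂
  have hsum : ∑ e ∈ (d₁ * d₂).divisors, innerTerm α γ (q₁ * q₂) (d₁ * d₂) e =
      (∑ e ∈ d₁.divisors, innerTerm α γ q₁ d₁ e) * ∑ e ∈ d₂.divisors, innerTerm α γ q₂ d₂ e :=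
    hd.sum_divisors_mul_eq_mul_sum fun e₁ he₁ e₂ he₂ =>
      innerTerm_mul hq hd₁ hd₂ (Nat.dvd_of_mem_divisors he₁) (Nat.dvd_of_mem_divisors he₂)
  rw [outerTerm, hsum, moebius_mul_cast hd, natCast_mul_cpow, Nat.totient_mul hd, outerTerm,
    outerTerm, Nat.cast_mul]
  ring

end Ffun

theorem Ffun_multiplicative_general (α γ : ℂ) :
    Ffun α γ 1 = 1 ∧
    ∀ q₁ q₂ : ℕ, 0 < q₁ → 0 < q₂ → Nat.Coprime q₁ q₂ →
      Ffun α γ (q₁ * q₂) = Ffun α γ q₁ * Ffun α γ q₂ := by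
  refine ⟨by simp [Ffun, Phi], fun q₁ q₂ _ _ hq => ?_⟩
  have hsum : ∑ d ∈ (q₁ * q₂).divisors, Ffun.outerTerm α γ (q₁ * q₂) d =
      (∑ d ∈ q₁.divisors, Ffun.outerTerm α γ q₁ d) *
        ∑ d ∈ q₂.divisors, Ffun.outerTerm α γ q₂ d :=
    hq.sum_divisors_mul_eq_mul_sum fun d₁ hd₁ d₂ hd₂ =>
      Ffun.outerTerm_mul hq (Nat.dvd_of_mem_divisors hd₁) (Nat.dvd_of_mem_divisors hd₂)
  simp only [Ffun.eq_cpow_mul_sum_outerTerm]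
  rw [hsum, natCast_mul_cpow, mul_mul_mul_comm]

theorem Ffun_multiplicative (α γ : ℂ) (h : (α - γ).re < 1) :
    Ffun α γ 1 = 1 ∧
    ∀ q₁ q₂ : ℕ, 0 < q₁ → 0 < q₂ → Nat.Coprime q₁ q₂ →
      Ffun α γ (q₁ * q₂) = Ffun α γ q₁ * Ffun α γ q₂ :=
  Ffun_multiplicative_general α γ
end

section
/- Let α, β, γ, δ be complex numbers, p a prime, and x a complex number with |x| < p^{Re(α+β)} and |x| < 1. Then ∑_{j=0}^∞ I_{α,γ}(p^j) I_{β,δ}(p^j) x^j converges and equals (1 - p^{-β-γ} x - p^{-α-δ} x + p^{-γ-δ} x)/(1 - p^{-α-β} x). -/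
/-!
Möbius kills every divisor pair of `p ^ (m + 1)` except `(p ^ (m + 1), 1)` and `(p ^ m, p)`, so
`I_{α,γ}(p^(m+1)) = p^{-αm} (p^{-α} - p^{-γ})`. Hence the series is `1` plus a geometric series
with ratio `p^{-α-β} x`, whose norm is `< 1` exactly by the hypothesis `|x| < p^{Re(α+β)}`.
-/

open scoped BigOperators

open ArithmeticFunction Complex

lemma Ifun_one (α γ : ℂ) : Ifun α γ 1 = 1 := by
  simp [Ifun]

lemma Ifun_prime_pow_succ {p : ℕ} (hp : p.Prime) (α γ : ℂ) (m : ℕ) :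
    Ifun α γ (p ^ (m + 1))
      = ((p : ℂ) ^ (-α)) ^ m * ((p : ℂ) ^ (-α) - (p : ℂ) ^ (-γ)) := by
  have hcpow (k : ℕ) (w : ℂ) : ((p ^ k : ℕ) : ℂ) ^ w = ((p : ℂ) ^ w) ^ k := by
    rw [Nat.cast_pow, ← natCast_cpow_natCast_mul, cpow_nat_mul]
  rw [Ifun, Nat.sum_divisorsAntidiagonal'
      (fun d e : ℕ => (moebius e : ℂ) * (d : ℂ) ^ (-α) * (e : ℂ) ^ (-γ)),
    Nat.sum_divisors_prime_pow hp, Finset.sum_range_succ', Finset.sum_range_succ']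
  have hvanish : ∀ i ∈ Finset.range m,
      (moebius (p ^ (i + 1 + 1)) : ℂ) * ((p ^ (m + 1) / p ^ (i + 1 + 1) : ℕ) : ℂ) ^ (-α)
        * ((p ^ (i + 1 + 1) : ℕ) : ℂ) ^ (-γ) = 0 := by
    intro i _
    simp [moebius_apply_prime_pow hp]
  rw [Finset.sum_eq_zero hvanish, Nat.pow_div (by omega) hp.pos, Nat.pow_div (by omega) hp.pos]
  simp only [hcpow]
  simp [moebius_apply_prime hp, pow_succ]
  ring

lemma hasSum_of_succ_eq_geometric {K : Type*} [NormedDivisionRing K] [CompleteSpace K]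
    {f : ℕ → K} {c r : K} (hr : ‖r‖ < 1) (hf : ∀ j, f (j + 1) = c * r ^ j) :
    HasSum f (f 0 + c * (1 - r)⁻¹) := by
  have htail : HasSum (fun j => f (j + 1)) (c * (1 - r)⁻¹) := by
    simpa only [hf] using (hasSum_geometric_of_norm_lt_one hr).mul_left c
  rw [add_comm]
  simpa using (hasSum_nat_add_iff 1).mp htail

lemma norm_natCast_cpow_neg_mul_lt_one {n : ℕ} (hn : 0 < n) {s x : ℂ}
    (hx : ‖x‖ < (n : ℝ) ^ s.re) : ‖(n : ℂ) ^ (-s) * x‖ < 1 := by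
  have hpos : (0 : ℝ) < (n : ℝ) ^ s.re := by positivity
  rw [norm_mul, norm_natCast_cpow_of_pos hn, neg_re, Real.rpow_neg (Nat.cast_nonneg n),
    inv_mul_lt_iff₀ hpos, mul_one]
  exact hx

theorem Ifun_product_prime_power_series_general (α β γ δ : ℂ) (p : ℕ) (hp : p.Prime) (x : ℂ)
    (hx1 : ‖x‖ < (p : ℝ) ^ (α + β).re) :
    Summable (fun j : ℕ => Ifun α γ (p ^ j) * Ifun β δ (p ^ j) * x ^ j) ∧
    ∑' j : ℕ, Ifun α γ (p ^ j) * Ifun β δ (p ^ j) * x ^ j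
      = (1 - (p : ℂ) ^ (-β - γ) * x - (p : ℂ) ^ (-α - δ) * x + (p : ℂ) ^ (-γ - δ) * x)
          / (1 - (p : ℂ) ^ (-α - β) * x) := by
  have hsplit (u v : ℂ) : (p : ℂ) ^ (-u - v) = (p : ℂ) ^ (-u) * (p : ℂ) ^ (-v) := by
    rw [sub_eq_add_neg, cpow_add _ _ (Nat.cast_ne_zero.mpr hp.ne_zero)]
  simp only [hsplit]
  set a := (p : ℂ) ^ (-α)
  set b := (p : ℂ) ^ (-β)
  have hr : ‖a * b * x‖ < 1 := by
    have h := norm_natCast_cpow_neg_mul_lt_one hp.pos hx1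
    rwa [neg_add', hsplit] at h
  have hsum := hasSum_of_succ_eq_geometric (c := (a - p ^ (-γ)) * (b - p ^ (-δ)) * x) hr
    (f := fun j => Ifun α γ (p ^ j) * Ifun β δ (p ^ j) * x ^ j)
    (fun j => by simp only [Ifun_prime_pow_succ hp]; ring)
  refine ⟨hsum.summable, hsum.tsum_eq.trans ?_⟩
  have hden : 1 - a * b * x ≠ 0 := sub_ne_zero.mpr fun h => by simp [← h] at hr
  simp only [pow_zero, Ifun_one]
  field_simp
  ring

theorem Ifun_product_prime_power_series (α β γ δ : ℂ) (p : ℕ) (hp : p.Prime) (x : ℂ)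
    (hx1 : ‖x‖ < (p : ℝ) ^ (α + β).re) (hx2 : ‖x‖ < 1) :
    Summable (fun j : ℕ => Ifun α γ (p ^ j) * Ifun β δ (p ^ j) * x ^ j) ∧
    ∑' j : ℕ, Ifun α γ (p ^ j) * Ifun β δ (p ^ j) * x ^ j
      = (1 - (p : ℂ) ^ (-β - γ) * x - (p : ℂ) ^ (-α - δ) * x + (p : ℂ) ^ (-γ - δ) * x)
          / (1 - (p : ℂ) ^ (-α - β) * x) :=
  Ifun_product_prime_power_series_general α β γ δ p hp x hx1
end

section
/- Let α, β, γ, δ be complex numbers whose real parts are at most 1/4 in absolute value, and let s be a complex number with Re s > 3/2. Then the Rankin–Selberg-type Dirichlet series ∑_{m=1}^∞ I_{α,γ}(m) I_{β,δ}(m) m^{-s} converges absolutely and equals ζ(s+α+β) · ∏_p (1 - p^{-s-β-γ} - p^{-s-α-δ} + p^{-s-γ-δ}), where the product over all primes p converges absolutely and ζ is the Riemann zeta function. -/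
open scoped BigOperators

/-!
`Ifun α γ` is the Dirichlet convolution of `n ↦ n^{-α}` with `n ↦ μ(n) n^{-γ}`, so it is
multiplicative, and so is `a(n) = I_{α,γ}(n) I_{β,δ}(n) n^{-s}`. Since
`I_{α,γ}(p^{k+1}) = p^{-kα} (p^{-α} - p^{-γ})`, the local factor `∑ₖ a(p^k)` is a geometric
series with ratio `p^{-s-α-β}`; it sums to
`(1 - p^{-s-α-β})⁻¹ (1 - p^{-s-β-γ} - p^{-s-α-δ} + p^{-s-γ-δ})`, and the
Euler product of `ζ(s+α+β)` collects the first factors.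

Absolute convergence: `|I_{α,γ}(n)| ≤ τ(n) n^{1/4}`, and `τ(n)² ≤ (τ ∗ τ)(n)` because
`τ(de) ≤ τ(d) τ(e)`; the Dirichlet series of `τ ∗ τ = 1 ∗ 1 ∗ 1 ∗ 1` converges absolutely at
`Re s - 1/2 > 1`.
-/

namespace RankinSelberg

open ArithmeticFunction Finset
open scoped ArithmeticFunction.Moebius ArithmeticFunction.zeta ArithmeticFunction.sigma

/-- Since `(0 : ℂ) ^ 0 = 1`, the value at `0` has to be set by hand. -/
noncomputable def natCpow (z : ℂ) : ArithmeticFunction ℂ :=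
  ⟨fun n => if n = 0 then 0 else (n : ℂ) ^ z, if_pos rfl⟩

lemma natCpow_apply {z : ℂ} {n : ℕ} (hn : n ≠ 0) : natCpow z n = (n : ℂ) ^ z := if_neg hn

lemma isMultiplicative_natCpow (z : ℂ) : (natCpow z).IsMultiplicative := by
  refine ⟨(natCpow_apply one_ne_zero).trans (by simp), fun {m n} _ => ?_⟩
  rcases eq_or_ne m 0 with rfl | hm
  · simp [natCpow]
  rcases eq_or_ne n 0 with rfl | hn
  · simp [natCpow]
  rw [natCpow_apply (mul_ne_zero hm hn), natCpow_apply hm, natCpow_apply hn, Nat.cast_mul,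
    Complex.natCast_mul_natCast_cpow]

lemma natCast_pow_cpow (p m : ℕ) (z : ℂ) : ((p ^ m : ℕ) : ℂ) ^ z = ((p : ℂ) ^ z) ^ m := by
  rw [Nat.cast_pow, ← Complex.natCast_cpow_natCast_mul, Complex.cpow_nat_mul]

lemma norm_natCast_cpow_le {n : ℕ} {z : ℂ} {a : ℝ} (hn : n ≠ 0) (hz : z.re ≤ a) :
    ‖(n : ℂ) ^ z‖ ≤ (n : ℝ) ^ a := by
  rw [Complex.norm_natCast_cpow_of_pos (Nat.pos_of_ne_zero hn)]
  exact Real.rpow_le_rpow_of_exponent_le (by exact_mod_cast Nat.one_le_iff_ne_zero.mpr hn) hz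

noncomputable def ifunArith (α γ : ℂ) : ArithmeticFunction ℂ :=
  natCpow (-α) * (μ : ArithmeticFunction ℂ).pmul (natCpow (-γ))

lemma ifunArith_apply (α γ : ℂ) (n : ℕ) : ifunArith α γ n = Ifun α γ n := by
  rw [ifunArith, mul_apply, Ifun]
  refine sum_congr rfl fun x hx => ?_
  rw [natCpow_apply (Nat.left_ne_zero_of_mem_divisorsAntidiagonal hx), pmul_apply, intCoe_apply,
    natCpow_apply (Nat.right_ne_zero_of_mem_divisorsAntidiagonal hx), mul_assoc, mul_left_comm]

lemma isMultiplicative_ifunArith (α γ : ℂ) : (ifunArith α γ).IsMultiplicative :=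
  (isMultiplicative_natCpow _).mul
    (isMultiplicative_moebius.intCast.pmul (isMultiplicative_natCpow _))

noncomputable def rankinSelbergTerm (α β γ δ s : ℂ) : ArithmeticFunction ℂ :=
  ((ifunArith α γ).pmul (ifunArith β δ)).pmul (natCpow (-s))

lemma rankinSelbergTerm_apply (α β γ δ s : ℂ) {n : ℕ} (hn : n ≠ 0) :
    rankinSelbergTerm α β γ δ s n = Ifun α γ n * Ifun β δ n * (n : ℂ) ^ (-s) := by
  rw [rankinSelbergTerm, pmul_apply, pmul_apply, ifunArith_apply, ifunArith_apply,
    natCpow_apply hn]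

lemma isMultiplicative_rankinSelbergTerm (α β γ δ s : ℂ) :
    (rankinSelbergTerm α β γ δ s).IsMultiplicative :=
  ((isMultiplicative_ifunArith α γ).pmul (isMultiplicative_ifunArith β δ)).pmul
    (isMultiplicative_natCpow _)

noncomputable def eulerFactor (α β γ δ s : ℂ) (p : ℕ) : ℂ :=
  1 - (p : ℂ) ^ (-s - β - γ) - (p : ℂ) ^ (-s - α - δ) + (p : ℂ) ^ (-s - γ - δ)

lemma card_divisors_mul_le (m n : ℕ) : #(m * n).divisors ≤ #m.divisors * #n.divisors :=
  Nat.divisors_mul m n ▸ card_mul_le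

lemma card_divisorsAntidiagonal (n : ℕ) : #n.divisorsAntidiagonal = σ 0 n := by
  rw [sigma_zero_apply, ← Nat.map_div_right_divisors, card_map]

lemma sq_sigma_zero_le (n : ℕ) : σ 0 n ^ 2 ≤ (σ 0 * σ 0) n := by
  calc σ 0 n ^ 2 = ∑ _x ∈ n.divisorsAntidiagonal, #n.divisors := by
        rw [sum_const, card_divisorsAntidiagonal, smul_eq_mul, sq, sigma_zero_apply]
    _ ≤ (σ 0 * σ 0) n := by
        rw [mul_apply]
        refine sum_le_sum fun x hx => ?_
        rw [sigma_zero_apply, sigma_zero_apply, ← (Nat.mem_divisorsAntidiagonal.mp hx).1]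
        exact card_divisors_mul_le _ _

lemma summable_sigma_zero_mul_sigma_zero_mul_rpow {r : ℝ} (hr : 1 < r) :
    Summable fun n : ℕ => ((σ 0 * σ 0) n : ℝ) * (n : ℝ) ^ (-r) := by
  have hζ : LSeriesSummable (fun n => (ζ : ArithmeticFunction ℂ) n) r := by
    simpa only [natCoe_apply] using LSeriesSummable_zeta_iff.mpr (by simpa using hr)
  have h := LSeriesSummable_mul (LSeriesSummable_mul hζ hζ) (LSeriesSummable_mul hζ hζ)
  have hσ : σ 0 * σ 0 = ζ * ζ * (ζ * ζ) := by rw [← zeta_mul_pow_eq_sigma, pow_zero_eq_zeta]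
  rw [← natCoe_mul, ← natCoe_mul, ← hσ] at h
  refine (summable_norm_iff.mpr h).congr fun n => ?_
  rcases eq_or_ne n 0 with rfl | hn
  · simp
  rw [LSeries.norm_term_eq, if_neg hn, natCoe_apply, Complex.norm_natCast, Complex.ofReal_re,
    Real.rpow_neg (Nat.cast_nonneg n), div_eq_mul_inv]

lemma norm_Ifun_le {α γ : ℂ} {a : ℝ} (hα : -a ≤ α.re) (hγ : -a ≤ γ.re) (n : ℕ) :
    ‖Ifun α γ n‖ ≤ σ 0 n * (n : ℝ) ^ a := by
  rw [Ifun, ← card_divisorsAntidiagonal, ← nsmul_eq_mul, ← sum_const]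
  refine (norm_sum_le _ _).trans (sum_le_sum fun x hx => ?_)
  have hμ : ‖(μ x.2 : ℂ)‖ ≤ 1 := by
    rw [Complex.norm_intCast, ← Int.cast_abs]
    exact_mod_cast abs_moebius_le_one
  have hd := norm_natCast_cpow_le (Nat.left_ne_zero_of_mem_divisorsAntidiagonal hx)
    (show (-α).re ≤ a by rw [Complex.neg_re]; linarith)
  have he := norm_natCast_cpow_le (Nat.right_ne_zero_of_mem_divisorsAntidiagonal hx)
    (show (-γ).re ≤ a by rw [Complex.neg_re]; linarith)
  calc ‖(μ x.2 : ℂ) * (x.1 : ℂ) ^ (-α) * (x.2 : ℂ) ^ (-γ)‖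
      ≤ 1 * (x.1 : ℝ) ^ a * (x.2 : ℝ) ^ a := by
        rw [norm_mul, norm_mul]
        gcongr
    _ = (n : ℝ) ^ a := by
        rw [one_mul, ← Real.mul_rpow (Nat.cast_nonneg _) (Nat.cast_nonneg _), ← Nat.cast_mul,
          (Nat.mem_divisorsAntidiagonal.mp hx).1]

lemma Ifun_prime_pow_succ {p : ℕ} (hp : p.Prime) (α γ : ℂ) (k : ℕ) :
    Ifun α γ (p ^ (k + 1)) = ((p : ℂ) ^ (-α)) ^ k * ((p : ℂ) ^ (-α) - (p : ℂ) ^ (-γ)) := by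
  have hμ : ∀ i, (μ (p ^ (i + 2)) : ℂ) = 0 := fun i => by
    rw [moebius_apply_prime_pow hp (by omega), if_neg (by omega), Int.cast_zero]
  have hdiv : p ^ (k + 1) / p = p ^ k := by rw [pow_succ, Nat.mul_div_cancel _ hp.pos]
  rw [Ifun, Nat.sum_divisorsAntidiagonal'
      (f := fun d e => (μ e : ℂ) * (d : ℂ) ^ (-α) * (e : ℂ) ^ (-γ)),
    Nat.sum_divisors_prime_pow hp, sum_range_succ', sum_range_succ']
  simp only [hμ, zero_mul, sum_const_zero, zero_add, pow_zero, pow_one, Nat.div_one,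
    moebius_apply_one, moebius_apply_prime hp, hdiv, natCast_pow_cpow, Nat.cast_one,
    Complex.one_cpow]
  push_cast
  ring

lemma hasSum_rankinSelbergTerm_prime_pow {α β γ δ s : ℂ} (hs : 0 < (s + α + β).re) {p : ℕ}
    (hp : p.Prime) :
    HasSum (fun e => rankinSelbergTerm α β γ δ s (p ^ e))
      ((1 - (p : ℂ) ^ (-(s + α + β)))⁻¹ * eulerFactor α β γ δ s p) := by
  have hp0 : (p : ℂ) ≠ 0 := Nat.cast_ne_zero.mpr hp.ne_zero
  set a := (p : ℂ) ^ (-α)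
  set b := (p : ℂ) ^ (-β)
  set c := (p : ℂ) ^ (-γ)
  set d := (p : ℂ) ^ (-δ)
  set t := (p : ℂ) ^ (-s)
  have hX : (p : ℂ) ^ (-(s + α + β)) = a * b * t := by
    rw [show -(s + α + β) = -α + -β + -s by ring, Complex.cpow_add _ _ hp0,
      Complex.cpow_add _ _ hp0]
  have hQ : eulerFactor α β γ δ s p = 1 - t * b * c - t * a * d + t * c * d := by
    simp only [eulerFactor, sub_eq_add_neg, Complex.cpow_add _ _ hp0]
    rfl
  have hr : ‖a * b * t‖ < 1 := by
    rw [← hX, Complex.norm_natCast_cpow_of_pos hp.pos]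
    exact Real.rpow_lt_one_of_one_lt_of_neg (by exact_mod_cast hp.one_lt)
      (by rw [Complex.neg_re]; exact neg_lt_zero.mpr hs)
  have hne : 1 - a * b * t ≠ 0 :=
    sub_ne_zero.mpr fun h => by rw [← h, norm_one] at hr; exact lt_irrefl _ hr
  have hterm : ∀ k, rankinSelbergTerm α β γ δ s (p ^ (k + 1))
      = (a * b * t) ^ k * ((a - c) * (b - d) * t) := fun k => by
    rw [rankinSelbergTerm_apply _ _ _ _ _ (pow_ne_zero _ hp.ne_zero), Ifun_prime_pow_succ hp,
      Ifun_prime_pow_succ hp, natCast_pow_cpow]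
    ring
  have htail : HasSum (fun k => rankinSelbergTerm α β γ δ s (p ^ (k + 1)))
      ((1 - a * b * t)⁻¹ * ((a - c) * (b - d) * t)) := by
    simpa only [hterm] using
      (hasSum_geometric_of_norm_lt_one hr).mul_right ((a - c) * (b - d) * t)
  have hsum := (hasSum_nat_add_iff
    (f := fun e => rankinSelbergTerm α β γ δ s (p ^ e)) 1).mp htail
  rw [sum_range_one, pow_zero, (isMultiplicative_rankinSelbergTerm α β γ δ s).map_one] at hsum
  rwa [hX, hQ, show 1 - t * b * c - t * a * d + t * c * d
      = (a - c) * (b - d) * t + (1 - a * b * t) by ring, mul_add, inv_mul_cancel₀ hne]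

section EulerProduct

variable {α β γ δ s : ℂ} {a : ℝ}

lemma norm_rankinSelbergTerm_le (hα : -a ≤ α.re) (hβ : -a ≤ β.re) (hγ : -a ≤ γ.re)
    (hδ : -a ≤ δ.re) (n : ℕ) :
    ‖rankinSelbergTerm α β γ δ s n‖ ≤ (σ 0 * σ 0) n * (n : ℝ) ^ (-(s.re - 2 * a)) := by
  rcases eq_or_ne n 0 with rfl | hn
  · simp
  have hn' : (0 : ℝ) < n := by exact_mod_cast Nat.pos_of_ne_zero hn
  rw [rankinSelbergTerm_apply _ _ _ _ _ hn, norm_mul, norm_mul,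
    Complex.norm_natCast_cpow_of_pos (Nat.pos_of_ne_zero hn)]
  calc ‖Ifun α γ n‖ * ‖Ifun β δ n‖ * (n : ℝ) ^ (-s).re
      ≤ (σ 0 n * (n : ℝ) ^ a) * (σ 0 n * (n : ℝ) ^ a) * (n : ℝ) ^ (-s).re := by
        gcongr
        exacts [norm_Ifun_le hα hγ n, norm_Ifun_le hβ hδ n]
    _ = (σ 0 n ^ 2 : ℕ) * (n : ℝ) ^ (-(s.re - 2 * a)) := by
        rw [Complex.neg_re, show -(s.re - 2 * a) = a + a + -s.re by ring, Real.rpow_add hn',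
          Real.rpow_add hn']
        push_cast
        ring
    _ ≤ (σ 0 * σ 0) n * (n : ℝ) ^ (-(s.re - 2 * a)) := by
        gcongr
        exact sq_sigma_zero_le n

lemma summable_norm_rankinSelbergTerm (hα : -a ≤ α.re) (hβ : -a ≤ β.re) (hγ : -a ≤ γ.re)
    (hδ : -a ≤ δ.re) (hs : 1 + 2 * a < s.re) :
    Summable fun n => ‖rankinSelbergTerm α β γ δ s n‖ :=
  (summable_sigma_zero_mul_sigma_zero_mul_rpow (by linarith)).of_nonneg_of_le
    (fun _ => norm_nonneg _) (norm_rankinSelbergTerm_le hα hβ hγ hδ)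

lemma norm_eulerFactor_sub_one_le (hα : -a ≤ α.re) (hβ : -a ≤ β.re) (hγ : -a ≤ γ.re)
    (hδ : -a ≤ δ.re) {p : ℕ} (hp : p ≠ 0) :
    ‖eulerFactor α β γ δ s p - 1‖ ≤ 3 * (p : ℝ) ^ (-(s.re - 2 * a)) := by
  have hpow : ∀ {u v : ℂ}, -a ≤ u.re → -a ≤ v.re →
      ‖(p : ℂ) ^ (-s - u - v)‖ ≤ (p : ℝ) ^ (-(s.re - 2 * a)) := fun hu hv =>
    norm_natCast_cpow_le hp (by simp only [Complex.sub_re, Complex.neg_re]; linarith)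
  calc ‖eulerFactor α β γ δ s p - 1‖
      = ‖-(p : ℂ) ^ (-s - β - γ) + -(p : ℂ) ^ (-s - α - δ) + (p : ℂ) ^ (-s - γ - δ)‖ := by
        rw [eulerFactor]
        congr 1
        ring
    _ ≤ ‖(p : ℂ) ^ (-s - β - γ)‖ + ‖(p : ℂ) ^ (-s - α - δ)‖ + ‖(p : ℂ) ^ (-s - γ - δ)‖ := by
        refine norm_add₃_le.trans_eq ?_
        rw [norm_neg, norm_neg]
    _ ≤ 3 * (p : ℝ) ^ (-(s.re - 2 * a)) := by
        linarith [hpow hβ hγ, hpow hα hδ, hpow hγ hδ]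

lemma summable_norm_eulerFactor_sub_one (hα : -a ≤ α.re) (hβ : -a ≤ β.re) (hγ : -a ≤ γ.re)
    (hδ : -a ≤ δ.re) (hs : 1 + 2 * a < s.re) :
    Summable fun p : Nat.Primes => ‖eulerFactor α β γ δ s p - 1‖ :=
  ((Nat.Primes.summable_rpow.mpr (by linarith)).mul_left 3).of_nonneg_of_le
    (fun _ => norm_nonneg _) fun p => norm_eulerFactor_sub_one_le hα hβ hγ hδ p.prop.ne_zero

lemma multipliable_eulerFactor (hα : -a ≤ α.re) (hβ : -a ≤ β.re) (hγ : -a ≤ γ.re)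
    (hδ : -a ≤ δ.re) (hs : 1 + 2 * a < s.re) :
    Multipliable fun p : Nat.Primes => eulerFactor α β γ δ s p := by
  simpa using multipliable_one_add_of_summable
    (summable_norm_eulerFactor_sub_one hα hβ hγ hδ hs)

lemma tsum_rankinSelbergTerm (hα : -a ≤ α.re) (hβ : -a ≤ β.re) (hγ : -a ≤ γ.re)
    (hδ : -a ≤ δ.re) (hs : 1 + 2 * a < s.re) :
    ∑' n, rankinSelbergTerm α β γ δ s n
      = riemannZeta (s + α + β) * ∏' p : Nat.Primes, eulerFactor α β γ δ s p := by
  have hsαβ : 1 < (s + α + β).re := by simp only [Complex.add_re]; linarith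
  refine ((isMultiplicative_rankinSelbergTerm α β γ δ s).eulerProduct_hasProd
    (summable_norm_rankinSelbergTerm hα hβ hγ hδ hs)).unique ?_
  convert (riemannZeta_eulerProduct_hasProd hsαβ).mul
    (multipliable_eulerFactor hα hβ hγ hδ hs).hasProd using 2 with p
  exact (hasSum_rankinSelbergTerm_prime_pow (by linarith) p.prop).tsum_eq

end EulerProduct

end RankinSelberg

open RankinSelberg

theorem rankin_selberg_euler_product (α β γ δ s : ℂ)
    (hα : |α.re| ≤ 1/4) (hβ : |β.re| ≤ 1/4) (hγ : |γ.re| ≤ 1/4) (hδ : |δ.re| ≤ 1/4)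
    (hs : 3/2 < s.re) :
    (Summable fun m : ℕ =>
      ‖Ifun α γ (m + 1) * Ifun β δ (m + 1) * ((m + 1 : ℕ) : ℂ) ^ (-s)‖) ∧
    (Summable fun p : Nat.Primes =>
      ‖(1 - ((p : ℕ) : ℂ) ^ (-s - β - γ) - ((p : ℕ) : ℂ) ^ (-s - α - δ)
          + ((p : ℕ) : ℂ) ^ (-s - γ - δ)) - 1‖) ∧
    Multipliable (fun p : Nat.Primes =>
      1 - ((p : ℕ) : ℂ) ^ (-s - β - γ) - ((p : ℕ) : ℂ) ^ (-s - α - δ)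
        + ((p : ℕ) : ℂ) ^ (-s - γ - δ)) ∧
    ∑' m : ℕ, Ifun α γ (m + 1) * Ifun β δ (m + 1) * ((m + 1 : ℕ) : ℂ) ^ (-s)
      = riemannZeta (s + α + β) *
          ∏' p : Nat.Primes,
            (1 - ((p : ℕ) : ℂ) ^ (-s - β - γ) - ((p : ℕ) : ℂ) ^ (-s - α - δ)
              + ((p : ℕ) : ℂ) ^ (-s - γ - δ)) := by
  have hα' := (abs_le.mp hα).1
  have hβ' := (abs_le.mp hβ).1
  have hγ' := (abs_le.mp hγ).1
  have hδ' := (abs_le.mp hδ).1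
  have hs' : 1 + 2 * (1 / 4 : ℝ) < s.re := by linarith
  have hterm : ∀ m : ℕ, rankinSelbergTerm α β γ δ s (m + 1)
      = Ifun α γ (m + 1) * Ifun β δ (m + 1) * ((m + 1 : ℕ) : ℂ) ^ (-s) := fun m =>
    rankinSelbergTerm_apply α β γ δ s m.succ_ne_zero
  have hsum := summable_norm_rankinSelbergTerm hα' hβ' hγ' hδ' hs'
  refine ⟨?_, summable_norm_eulerFactor_sub_one hα' hβ' hγ' hδ' hs',
    multipliable_eulerFactor hα' hβ' hγ' hδ' hs', ?_⟩
  · simpa only [hterm] using (summable_nat_add_iff 1).mpr hsum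
  · change _ = riemannZeta (s + α + β) * ∏' p : Nat.Primes, eulerFactor α β γ δ s p
    rw [← tsum_rankinSelbergTerm hα' hβ' hγ' hδ' hs', hsum.of_norm.tsum_eq_zero_add,
      ArithmeticFunction.map_zero, zero_add]
    simp only [hterm]
end

section
/- Let q be a positive integer and m a positive integer. Then e(m/q) = ∑_{d | gcd(m,q)} (1/φ(q/d)) ∑_{χ mod q/d} τ(χ̄) χ(m/d), where the inner sum is over all Dirichlet characters χ modulo q/d, χ̄ denotes the complex conjugate character, and τ(χ) = ∑_{a=1}^{Q} χ(a) e(a/Q) is the Gauss sum of a character χ modulo Q. -/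
/-!
Orthogonality of Dirichlet characters modulo `n` inverts the Gauss sums: for any function
`ψ` on `ZMod n`, `∑_χ (∑_a χ̄(a) ψ(a)) χ(c)` equals `φ(n) ψ(c)` when `c` is a unit and `0`
otherwise. Taking `ψ(a) = e(a/n)` with `n = q/d` and `c = m/d`, the `d`-th term of the sum is
`e(m/q)` when `m/d` and `q/d` are coprime, i.e. when `d = gcd(m, q)`, and vanishes otherwise.
-/

open Finset ComplexConjugate

theorem Nat.coprime_div_div_iff_eq_gcd {m n d : ℕ} (hd : d ∣ m.gcd n) (hmn : m.gcd n ≠ 0) :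
    (m / d).Coprime (n / d) ↔ d = m.gcd n := by
  rw [Nat.Coprime, Nat.gcd_div (hd.trans (m.gcd_dvd_left n)) (hd.trans (m.gcd_dvd_right n)),
    Nat.div_eq_iff_eq_mul_left (Nat.pos_of_dvd_of_pos hd (Nat.pos_of_ne_zero hmn)) hd, one_mul,
    eq_comm]

theorem ZMod.sum_Icc_one_natCast {n : ℕ} [NeZero n] {M : Type*} [AddCommMonoid M]
    (f : ZMod n → M) : ∑ a ∈ Icc 1 n, f a = ∑ x, f x := by
  refine sum_bij' (fun a _ => (a : ZMod n)) (fun x _ => (x - 1).val + 1) (by simp)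
    (fun x _ => mem_Icc.2 ⟨le_add_self, (x - 1).val_lt⟩) (fun a ha => ?_) (by simp) (by simp)
  obtain ⟨b, rfl⟩ : ∃ b, a = b + 1 := ⟨a - 1, by grind⟩
  simp [ZMod.val_natCast_of_lt (by grind : b < n)]

namespace DirichletCharacter

variable {n : ℕ}

theorem conj_apply_of_isUnit (χ : DirichletCharacter ℂ n) {a : ZMod n} (ha : IsUnit a) :
    conj (χ a) = χ a⁻¹ := by
  obtain ⟨u, rfl⟩ := ha
  rw [starRingEnd_apply, MulChar.star_apply', MulChar.inv_apply, Ring.inverse_unit,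
    ZMod.inv_coe_unit]

variable [NeZero n]

theorem sum_conj_mul_eq {a c : ZMod n} (hc : IsUnit c) :
    ∑ χ : DirichletCharacter ℂ n, conj (χ a) * χ c = if a = c then (n.totient : ℂ) else 0 := by
  by_cases ha : IsUnit a
  · simp_rw [conj_apply_of_isUnit _ ha]
    exact sum_char_inv_mul_char_eq ℂ ha c
  · have hac : a ≠ c := fun h => ha (h ▸ hc)
    simp [MulChar.map_nonunit _ ha, hac]

theorem sum_sum_conj_mul_mul (ψ : ZMod n → ℂ) (c : ZMod n) :
    ∑ χ : DirichletCharacter ℂ n, (∑ a, conj (χ a) * ψ a) * χ c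
      = if IsUnit c then n.totient * ψ c else 0 := by
  by_cases hc : IsUnit c
  · calc ∑ χ : DirichletCharacter ℂ n, (∑ a, conj (χ a) * ψ a) * χ c
        _ = ∑ a, ψ a * ∑ χ : DirichletCharacter ℂ n, conj (χ a) * χ c := by
          simp_rw [sum_mul, mul_sum]
          rw [sum_comm]
          exact sum_congr rfl fun _ _ => sum_congr rfl fun _ _ => by ring
        _ = n.totient * ψ c := by
          simp only [sum_conj_mul_eq hc, mul_ite, mul_zero, sum_ite_eq', mem_univ, if_true]
          ring
        _ = _ := (if_pos hc).symm
  · simp [MulChar.map_nonunit _ hc, hc]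

theorem one_div_totient_mul_sum_gauss_conj_mul_apply (c : ℕ) :
    (1 / (n.totient : ℂ)) *
        ∑ χ : DirichletCharacter ℂ n,
          (∑ a ∈ Icc 1 n, conj (χ (a : ZMod n)) *
            Complex.exp (2 * Real.pi * Complex.I * a / n)) * χ (c : ZMod n)
      = if c.Coprime n then Complex.exp (2 * Real.pi * Complex.I * c / n) else 0 := by
  have hexp (a : ℕ) :
      Complex.exp (2 * Real.pi * Complex.I * a / n) = ZMod.stdAddChar (a : ZMod n) :=
    (ZMod.toCircle_natCast a).symm
  have hgauss (χ : DirichletCharacter ℂ n) :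
      ∑ a ∈ Icc 1 n, conj (χ (a : ZMod n)) * ZMod.stdAddChar (a : ZMod n)
        = ∑ x, conj (χ x) * ZMod.stdAddChar x :=
    ZMod.sum_Icc_one_natCast fun x => conj (χ x) * ZMod.stdAddChar x
  have htotient : (n.totient : ℂ) ≠ 0 := by exact_mod_cast (Nat.totient_pos.2 n.pos_of_neZero).ne'
  simp_rw [hexp, hgauss, sum_sum_conj_mul_mul, ZMod.isUnit_iff_coprime]
  split_ifs
  · rw [one_div, inv_mul_cancel_left₀ htotient]
  · rw [mul_zero]

end DirichletCharacter

theorem additive_character_via_multiplicative_general (q m : ℕ) (hq : 0 < q) :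
    Complex.exp (2 * (Real.pi : ℂ) * Complex.I * (m : ℂ) / (q : ℂ))
      = ∑ d ∈ (Nat.gcd m q).divisors,
          (1 / (Nat.totient (q / d) : ℂ)) *
            ∑ χ : DirichletCharacter ℂ (q / d),
              (∑ a ∈ Finset.Icc 1 (q / d),
                (starRingEnd ℂ) (χ ((a : ℕ) : ZMod (q / d))) *
                  Complex.exp (2 * (Real.pi : ℂ) * Complex.I * (a : ℂ) / ((q / d : ℕ) : ℂ))) *
              χ (((m / d : ℕ) : ZMod (q / d))) := by
  have hgcd : m.gcd q ≠ 0 := (Nat.gcd_pos_of_pos_right m hq).ne'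
  have hterm (d : ℕ) (hd : d ∈ (m.gcd q).divisors) :
      (1 / (Nat.totient (q / d) : ℂ)) *
          ∑ χ : DirichletCharacter ℂ (q / d),
            (∑ a ∈ Finset.Icc 1 (q / d),
              (starRingEnd ℂ) (χ ((a : ℕ) : ZMod (q / d))) *
                Complex.exp (2 * (Real.pi : ℂ) * Complex.I * (a : ℂ) / ((q / d : ℕ) : ℂ))) *
            χ (((m / d : ℕ) : ZMod (q / d)))
        = if d = m.gcd q then Complex.exp (2 * Real.pi * Complex.I * m / q) else 0 := by
    have hdg : d ∣ m.gcd q := Nat.dvd_of_mem_divisors hd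
    have hdq : d ∣ q := hdg.trans (m.gcd_dvd_right q)
    have : NeZero (q / d) := ⟨(Nat.div_pos (Nat.le_of_dvd hq hdq) (Nat.pos_of_mem_divisors hd)).ne'⟩
    rw [DirichletCharacter.one_div_totient_mul_sum_gauss_conj_mul_apply, mul_div_assoc,
      Nat.cast_div_div_div_cancel_right hdq (hdg.trans (m.gcd_dvd_left q)), ← mul_div_assoc]
    exact if_congr (Nat.coprime_div_div_iff_eq_gcd hdg hgcd) rfl rfl
  rw [sum_congr rfl hterm, sum_ite_eq', if_pos (Nat.mem_divisors_self _ hgcd)]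

theorem additive_character_via_multiplicative (q m : ℕ) (hq : 0 < q) (hm : 0 < m) :
    Complex.exp (2 * (Real.pi : ℂ) * Complex.I * (m : ℂ) / (q : ℂ))
      = ∑ d ∈ (Nat.gcd m q).divisors,
          (1 / (Nat.totient (q / d) : ℂ)) *
            ∑ χ : DirichletCharacter ℂ (q / d),
              (∑ a ∈ Finset.Icc 1 (q / d),
                (starRingEnd ℂ) (χ ((a : ℕ) : ZMod (q / d))) *
                  Complex.exp (2 * (Real.pi : ℂ) * Complex.I * (a : ℂ) / ((q / d : ℕ) : ℂ))) *
              χ (((m / d : ℕ) : ZMod (q / d))) :=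
  additive_character_via_multiplicative_general q m hq
end

section
/- Let s be a complex number with Re s > 2. Then the integral over the vertical line Re z = 2 satisfies (1/2π) ∫_ℝ dy / ((2+iy)(s-2-iy)) = 1/s; equivalently, (1/2πi) ∫_{Re z = 2} dz/(z(s-z)) = 1/s, where the path is traversed upward. -/
/-!
Partial fractions give `1 / ((a + yI)(b - yI)) = (a + b)⁻¹ ((a + yI)⁻¹ + (b - yI)⁻¹)`, and the
second factor has the antiderivative `-I log (a + yI) + I log (b - yI)` as long as `Re a, Re b > 0`.
Over `[-R, R]` each logarithm changes its argument by almost `π` as `R → ∞`, so the integral over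
the whole line is `2π / (a + b)`; with `a = 2`, `b = s - 2` this is `2π / s`.
-/

open Complex Filter MeasureTheory Topology
open scoped Real

theorem integral_eq_of_hasDerivAt_of_tendsto_sub_neg {E : Type*} [NormedAddCommGroup E]
    [NormedSpace ℝ E] [CompleteSpace E] {F f : ℝ → E} {L : E} (hF : ∀ x, HasDerivAt F (f x) x)
    (hf : Integrable f) (hL : Tendsto (fun R => F R - F (-R)) atTop (𝓝 L)) :
    ∫ x, f x = L :=
  tendsto_nhds_unique (intervalIntegral_tendsto_integral hf tendsto_neg_atTop_atBot tendsto_id)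
    (hL.congr fun _ =>
      (intervalIntegral.integral_eq_sub_of_hasDerivAt (fun x _ => hF x)
        hf.intervalIntegrable).symm)

theorem tendsto_log_sub_mul_I_sub_log_add_mul_I {b : ℂ} (hb : 0 < b.re) :
    Tendsto (fun R : ℝ => log (b - R * I) - log (b + R * I)) atTop (𝓝 (-π * I)) := by
  have hcont : ContinuousAt (fun ε : ℝ => log (ε * b - I) - log (ε * b + I)) 0 :=
    (ContinuousAt.clog (by fun_prop) (by simp [mem_slitPlane_iff])).sub
      (ContinuousAt.clog (by fun_prop) (by simp [mem_slitPlane_iff]))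
  have hlim := hcont.tendsto.comp tendsto_inv_atTop_zero
  have hval : log (((0 : ℝ) : ℂ) * b - I) - log (((0 : ℝ) : ℂ) * b + I) = -π * I := by
    simp only [ofReal_zero, zero_mul, zero_sub, zero_add, log_neg_I, log_I]
    ring
  rw [hval] at hlim
  refine hlim.congr' ?_
  filter_upwards [eventually_gt_atTop 0] with R hR
  -- `b ± R I = R (b / R ± I)` and `log` splits off the positive real factor `R`
  have hne : ∀ w : ℂ, w.re = 0 → ((R⁻¹ : ℝ) : ℂ) * b + w ≠ 0 := fun w hw =>
    ne_zero_of_re_pos (by simpa [hw] using mul_pos (inv_pos.mpr hR) hb)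
  have hR' : (R : ℂ) ≠ 0 := ofReal_ne_zero.mpr hR.ne'
  have hsub : log (b - R * I) = Real.log R + log ((R⁻¹ : ℝ) * b - I) := by
    rw [← log_ofReal_mul hR (by simpa [sub_eq_add_neg] using hne (-I) (by simp))]
    congr 1
    push_cast
    field_simp
  have hadd : log (b + R * I) = Real.log R + log ((R⁻¹ : ℝ) * b + I) := by
    rw [← log_ofReal_mul hR (hne I I_re)]
    congr 1
    push_cast
    field_simp
  simp [hsub, hadd]

theorem one_add_abs_le_mul_norm_add_mul_I {a : ℂ} (ha : 0 < a.re) (y : ℝ) :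
    1 + |y| ≤ (1 + (1 + ‖a‖) / a.re) * ‖a + y * I‖ := by
  have hre : a.re ≤ ‖a + y * I‖ := by simpa using re_le_norm (a + y * I)
  have hy : |y| ≤ ‖a + y * I‖ + ‖a‖ := by
    simpa using norm_sub_le (a + y * I) a
  have : 1 + ‖a‖ ≤ (1 + ‖a‖) / a.re * ‖a + y * I‖ := by
    rw [div_mul_eq_mul_div, le_div_iff₀ ha]
    exact mul_le_mul_of_nonneg_left hre (by positivity)
  linarith

theorem norm_one_div_add_mul_I_mul_sub_mul_I_le {a b : ℂ} (ha : 0 < a.re) (hb : 0 < b.re)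
    (y : ℝ) :
    ‖1 / ((a + y * I) * (b - y * I))‖ ≤
      (1 + (1 + ‖a‖) / a.re) * (1 + (1 + ‖b‖) / b.re) * (1 + y ^ 2)⁻¹ := by
  have hA := one_add_abs_le_mul_norm_add_mul_I ha y
  have hB := one_add_abs_le_mul_norm_add_mul_I hb (-y)
  rw [abs_neg, ofReal_neg, neg_mul, ← sub_eq_add_neg] at hB
  have hA₀ : 0 < ‖a + y * I‖ := norm_pos_iff.mpr (ne_zero_of_re_pos (by simpa using ha))
  have hB₀ : 0 < ‖b - y * I‖ := norm_pos_iff.mpr (ne_zero_of_re_pos (by simpa using hb))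
  rw [norm_div, norm_one, norm_mul, ← div_eq_mul_inv, div_le_div_iff₀ (by positivity)
    (by positivity), one_mul]
  nlinarith [abs_nonneg y, sq_abs y, mul_le_mul hA hB (by positivity) (by positivity)]

theorem integrable_one_div_add_mul_I_mul_sub_mul_I {a b : ℂ} (ha : 0 < a.re) (hb : 0 < b.re) :
    Integrable fun y : ℝ => 1 / ((a + y * I) * (b - y * I)) := by
  refine (integrable_inv_one_add_sq.const_mul _).mono' ?_
    (ae_of_all _ (norm_one_div_add_mul_I_mul_sub_mul_I_le ha hb))
  refine (continuous_const.div (by fun_prop) fun y => mul_ne_zero ?_ ?_).aestronglyMeasurable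
  · exact ne_zero_of_re_pos (by simpa using ha)
  · exact ne_zero_of_re_pos (by simpa using hb)

theorem hasDerivAt_log_add_mul_I_sub_log_sub_mul_I {a b : ℂ} (ha : 0 < a.re) (hb : 0 < b.re)
    (y : ℝ) :
    HasDerivAt (fun y : ℝ => -I * log (a + y * I) + I * log (b - y * I))
      ((a + y * I)⁻¹ + (b - y * I)⁻¹) y := by
  have hA : HasDerivAt (fun y : ℝ => a + y * I) I y := by
    simpa using ((hasDerivAt_id y).ofReal_comp.mul_const I).const_add a
  have hB : HasDerivAt (fun y : ℝ => b - y * I) (-I) y := by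
    simpa using ((hasDerivAt_id y).ofReal_comp.mul_const I).const_sub b
  refine (((hA.clog_real (.inl (by simpa using ha))).const_mul (-I)).add
    ((hB.clog_real (.inl (by simpa using hb))).const_mul I)).congr_deriv ?_
  simp only [div_eq_mul_inv]
  linear_combination -((a + y * I)⁻¹ + (b - y * I)⁻¹) * I_mul_I

theorem integral_one_div_add_mul_I_mul_sub_mul_I {a b : ℂ} (ha : 0 < a.re) (hb : 0 < b.re) :
    ∫ y : ℝ, 1 / ((a + y * I) * (b - y * I)) = 2 * π / (a + b) := by
  have hab : a + b ≠ 0 := ne_zero_of_re_pos (by simpa using add_pos ha hb)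
  have hsplit : ∀ y : ℝ, 1 / ((a + y * I) * (b - y * I)) =
      (a + b)⁻¹ * ((a + y * I)⁻¹ + (b - y * I)⁻¹) := fun y => by
    rw [inv_add_inv (ne_zero_of_re_pos (by simpa using ha)) (ne_zero_of_re_pos (by simpa using hb))]
    field_simp
    ring
  have hint : Integrable fun y : ℝ => (a + y * I)⁻¹ + (b - y * I)⁻¹ :=
    ((integrable_one_div_add_mul_I_mul_sub_mul_I ha hb).const_mul (a + b)).congr
      (ae_of_all _ fun y => by simp only [hsplit, mul_inv_cancel_left₀ hab])
  have hlim : Tendsto (fun R : ℝ => (-I * log (a + R * I) + I * log (b - R * I)) -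
      (-I * log (a + (-R : ℝ) * I) + I * log (b - (-R : ℝ) * I))) atTop (𝓝 (2 * π)) := by
    have h := ((tendsto_log_sub_mul_I_sub_log_add_mul_I ha).const_mul I).add
      ((tendsto_log_sub_mul_I_sub_log_add_mul_I hb).const_mul I)
    rw [show I * (-π * I) + I * (-π * I) = 2 * π by linear_combination (-2 * π : ℂ) * I_mul_I]
      at h
    refine h.congr fun R => ?_
    simp only [ofReal_neg, neg_mul, sub_neg_eq_add, ← sub_eq_add_neg]
    ring
  simp_rw [hsplit, integral_const_mul, integral_eq_of_hasDerivAt_of_tendsto_sub_neg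
    (hasDerivAt_log_add_mul_I_sub_log_sub_mul_I ha hb) hint hlim]
  rw [div_eq_inv_mul]

theorem vertical_line_integral_eq (s : ℂ) (hs : 2 < s.re) :
    (1 / (2 * (Real.pi : ℂ))) *
        ∫ y : ℝ, 1 / ((2 + (y : ℂ) * Complex.I) * (s - 2 - (y : ℂ) * Complex.I))
      = 1 / s := by
  rw [integral_one_div_add_mul_I_mul_sub_mul_I (by norm_num) (by simpa using hs), add_sub_cancel]
  field_simp
end
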